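/- arXiv:2211.03424 — 2 statements merged into one kernel-verified Lean document; each statement's English description precedes it below -/
import Mathlib

section
/- Let n ≥ 4 be an integer and let a > 0 be a real number satisfying a(1 + ε_a) ≤ 1. Suppose there exists an integer j with 1 ≤ j ≤ ⌊n/2⌋ − 1 such that (1 + ε_a)·(1 + 𝟙(j+1 = n/2) + ε_a) ≤ j + 1, where 𝟙(j+1 = n/2) equals 1 if 2(j+1) = n and 0 otherwise. Then η_a < η̂_a. -/
open scoped BigOperators

noncomputable def psi (n : ℕ) (a : ℝ) (j : ℕ) : ℝ :=
  ∑' k : ℕ, a ^ (j + k * n) / (Nat.factorial (j + k * n) : ℝ)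

noncomputable def phiHat (n : ℕ) (a : ℝ) (j : ℤ) : ℝ :=
  ∑ k ∈ Finset.range n, ∑ k' ∈ Finset.range n,
    if ((k' : ℤ) - (k : ℤ)) % (n : ℤ) = j % (n : ℤ) then psi n a k * psi n a k' else 0

noncomputable def phi (n : ℕ) (a : ℝ) (j : ℤ) : ℝ :=
  phiHat n a j / phiHat n a 0

noncomputable def eps (n : ℕ) (a : ℝ) : ℝ :=
  (1 + 2 * a * Real.exp a) * (1 + a ^ n * Real.exp a / (Nat.factorial n : ℝ)) ^ 2 - 1

noncomputable def zeta (n : ℕ) (a : ℝ) : ℝ :=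
  ∑ j ∈ Finset.Ico 1 n, phi n a (j : ℤ)

noncomputable def xi (n : ℕ) (a : ℝ) : ℝ :=
  sSup ((fun j : ℕ => phi n a (j : ℤ)) '' Set.Ico 1 n)

noncomputable def eta (n : ℕ) (a : ℝ) : ℝ :=
  sInf ((fun j : ℕ => phi n a ((j : ℤ) + 1) / phi n a (j : ℤ)) '' Set.Iio n)

noncomputable def alpha (n : ℕ) (b k : ℝ) : ℝ :=
  (∑ j ∈ Finset.range n,
      phi n b (j : ℤ) * (phi n k (j : ℤ)) ^ 4 *
        (phi n k ((j : ℤ) + 1) / (phi n k (j : ℤ) * phi n k 1))) /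
    (∑ j ∈ Finset.range n, phi n b (j : ℤ) * (phi n k (j : ℤ)) ^ 4)

noncomputable def rho (n : ℕ) (g : ℕ) : ℂ :=
  Complex.exp (2 * (Real.pi : ℂ) * Complex.I * (g : ℂ) / (n : ℂ))

noncomputable def etaHat (n : ℕ) (a : ℝ) : ℂ :=
  (∑ g ∈ Finset.range n, rho n g * (Real.exp (2 * a * (rho n g).re) : ℂ)) /
    (∑ g ∈ Finset.range n, (Real.exp (2 * a * (rho n g).re) : ℂ))


noncomputable def Phi (n : ℕ) (a : ℝ) (j : ℕ) : ℝ :=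
  ∑ k ∈ Finset.range n, psi n a k * psi n a ((k + j) % n)

lemma aux_inj (n : ℕ) (hn : 0 < n) (c d : ℕ) :
    Function.Injective (fun k : ℕ => c + (k + d) * n) := by
  intro x y hxy
  simp only at hxy
  have h1 : (x + d) * n = (y + d) * n := by omega
  have := Nat.eq_of_mul_eq_mul_right hn h1
  omega

lemma summable_psi (n : ℕ) (hn : 0 < n) (a : ℝ) (j : ℕ) :
    Summable (fun k : ℕ => a ^ (j + k * n) / (Nat.factorial (j + k * n) : ℝ)) := by
  have h := Real.summable_pow_div_factorial a
  have := h.comp_injective (aux_inj n hn j 0)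
  simpa [Function.comp_def] using this

lemma psi_ge (n : ℕ) (hn : 0 < n) (a : ℝ) (ha : 0 ≤ a) (j : ℕ) :
    a ^ j / (Nat.factorial j : ℝ) ≤ psi n a j := by
  have := Summable.le_tsum (summable_psi n hn a j) 0 (fun k _ => by positivity)
  simpa [psi] using this

lemma psi_pos (n : ℕ) (hn : 0 < n) (a : ℝ) (ha : 0 < a) (j : ℕ) : 0 < psi n a j :=
  lt_of_lt_of_le (by positivity) (psi_ge n hn a ha.le j)

lemma exp_eq_tsum (x : ℝ) : Real.exp x = ∑' n : ℕ, x ^ n / (Nat.factorial n : ℝ) := by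
  rw [Real.exp_eq_exp_ℝ, NormedSpace.exp_eq_tsum_div]

lemma sum_exp_terms_le {a : ℝ} (ha : 0 ≤ a) (s : Finset ℕ) :
    ∑ k ∈ s, a ^ k / (Nat.factorial k : ℝ) ≤ Real.exp a := by
  rw [exp_eq_tsum]
  exact Summable.sum_le_tsum s (fun i _ => by positivity) (Real.summable_pow_div_factorial a)

lemma factorial_triple_le (j m k : ℕ) :
    (Nat.factorial j * (Nat.factorial m * Nat.factorial k) : ℕ) ≤ Nat.factorial (j + m + k) := by
  have h1 : Nat.factorial m * Nat.factorial k ∣ Nat.factorial (m + k) :=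
    Nat.factorial_mul_factorial_dvd_factorial_add m k
  have h2 : Nat.factorial j * Nat.factorial (m + k) ∣ Nat.factorial (j + (m + k)) :=
    Nat.factorial_mul_factorial_dvd_factorial_add j (m + k)
  calc (Nat.factorial j * (Nat.factorial m * Nat.factorial k) : ℕ)
      ≤ Nat.factorial j * Nat.factorial (m + k) := by
        exact Nat.mul_le_mul_left _ (Nat.le_of_dvd (Nat.factorial_pos _) h1)
    _ ≤ Nat.factorial (j + (m + k)) := Nat.le_of_dvd (Nat.factorial_pos _) h2
    _ = Nat.factorial (j + m + k) := by ring_nf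

lemma psi_le (n : ℕ) (hn : 0 < n) (a : ℝ) (ha : 0 ≤ a) (j : ℕ) :
    psi n a j ≤ a ^ j / (Nat.factorial j : ℝ) *
      (1 + a ^ n * Real.exp a / (Nat.factorial n : ℝ)) := by
  have hsum := summable_psi n hn a j
  rw [psi, Summable.tsum_eq_zero_add hsum]
  have h0 : a ^ (j + 0 * n) / (Nat.factorial (j + 0 * n) : ℝ) = a ^ j / (Nat.factorial j : ℝ) := by
    norm_num
  rw [h0, mul_add, mul_one]
  gcongr _ + ?_
  have key : ∀ k : ℕ, a ^ (j + (k + 1) * n) / (Nat.factorial (j + (k + 1) * n) : ℝ) ≤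
      (a ^ j / (Nat.factorial j : ℝ)) * (a ^ n / (Nat.factorial n : ℝ)) *
        (a ^ (k * n) / (Nat.factorial (k * n) : ℝ)) := by
    intro k
    have hexp : j + (k + 1) * n = j + n + k * n := by ring
    rw [hexp]
    have hfact : (Nat.factorial j * (Nat.factorial n * Nat.factorial (k * n)) : ℝ) ≤
        (Nat.factorial (j + n + k * n) : ℝ) := by
      exact_mod_cast factorial_triple_le j n (k * n)
    have hpow : a ^ (j + n + k * n) = a ^ j * a ^ n * a ^ (k * n) := by
      rw [pow_add, pow_add]
    rw [hpow, div_le_iff₀ (by positivity)]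
    have heq : (a ^ j / (Nat.factorial j : ℝ) * (a ^ n / (Nat.factorial n : ℝ)) *
        (a ^ (k*n) / (Nat.factorial (k*n) : ℝ))) *
        ((Nat.factorial j : ℝ) * ((Nat.factorial n : ℝ) * (Nat.factorial (k * n) : ℝ))) =
        a ^ j * a ^ n * a ^ (k * n) := by
      field_simp
    calc a ^ j * a ^ n * a ^ (k * n) = _ := heq.symm
      _ ≤ _ := by
          apply mul_le_mul_of_nonneg_left hfact
          positivity
  have hsumtail : Summable (fun k : ℕ =>
      a ^ (j + (k + 1) * n) / (Nat.factorial (j + (k + 1) * n) : ℝ)) := by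
    have h := Real.summable_pow_div_factorial a
    exact h.comp_injective (aux_inj n hn j 1)
  have hsumkn : Summable (fun k : ℕ => a ^ (k * n) / (Nat.factorial (k * n) : ℝ)) := by
    have h := Real.summable_pow_div_factorial a
    have := h.comp_injective (aux_inj n hn 0 0)
    simpa [Function.comp_def] using this
  calc (∑' k : ℕ, a ^ (j + (k + 1) * n) / (Nat.factorial (j + (k + 1) * n) : ℝ))
      ≤ ∑' k : ℕ, (a ^ j / (Nat.factorial j : ℝ)) * (a ^ n / (Nat.factorial n : ℝ)) *
          (a ^ (k * n) / (Nat.factorial (k * n) : ℝ)) :=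
        Summable.tsum_le_tsum key hsumtail (hsumkn.mul_left _)
    _ = (a ^ j / (Nat.factorial j : ℝ)) * (a ^ n / (Nat.factorial n : ℝ)) *
          ∑' k : ℕ, a ^ (k * n) / (Nat.factorial (k * n) : ℝ) := tsum_mul_left
    _ ≤ (a ^ j / (Nat.factorial j : ℝ)) * (a ^ n / (Nat.factorial n : ℝ)) * Real.exp a := by
        have hts : (∑' k : ℕ, a ^ (k * n) / (Nat.factorial (k * n) : ℝ)) ≤ Real.exp a := by
          rw [exp_eq_tsum]
          refine Summable.tsum_le_tsum_of_inj (fun k => k * n)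
            (fun x y hxy => Nat.eq_of_mul_eq_mul_right hn hxy)
            (fun c _ => by positivity) (fun k => le_refl _) hsumkn
            (Real.summable_pow_div_factorial a)
        exact mul_le_mul_of_nonneg_left hts (by positivity)
    _ = a ^ j / (Nat.factorial j : ℝ) * (a ^ n * Real.exp a / (Nat.factorial n : ℝ)) := by
        ring

lemma cond_iff (n : ℕ) (hn : 0 < n) (j k k' : ℕ) (hk' : k' < n) :
    (((k' : ℤ) - (k : ℤ)) % (n : ℤ) = (j : ℤ) % (n : ℤ)) ↔ k' = (k + j) % n := by
  constructor
  · intro hmod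
    have h1 : ((k' : ℤ) - k) ≡ (j : ℤ) [ZMOD (n : ℤ)] := hmod
    have h2 : ((((k' : ℤ) - k) : ℤ) : ZMod n) = ((j : ℤ) : ZMod n) := by
      rwa [ZMod.intCast_eq_intCast_iff]
    have h3 : ((k' : ZMod n)) = ((k + j : ℕ) : ZMod n) := by
      push_cast at h2 ⊢
      linear_combination h2
    rw [ZMod.natCast_eq_natCast_iff] at h3
    have h4 : k' % n = (k + j) % n := h3
    rwa [Nat.mod_eq_of_lt hk'] at h4
  · intro hk
    subst hk
    have h3 : (((k + j) % n : ℕ) : ZMod n) = ((k + j : ℕ) : ZMod n) := by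
      simp [ZMod.natCast_mod]
    have h2 : ((((k + j) % n : ℕ) : ℤ) - (k : ℤ)) ≡ (j : ℤ) [ZMOD (n : ℤ)] := by
      rw [← ZMod.intCast_eq_intCast_iff]
      push_cast
      ring
    exact h2

lemma phiHat_eq_Phi (n : ℕ) (hn : 0 < n) (a : ℝ) (j : ℕ) :
    phiHat n a (j : ℤ) = Phi n a j := by
  rw [phiHat, Phi]
  apply Finset.sum_congr rfl
  intro k hk
  have : ∀ k' ∈ Finset.range n,
      (if ((k' : ℤ) - (k : ℤ)) % (n : ℤ) = (j : ℤ) % (n : ℤ) then psi n a k * psi n a k' else 0)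
      = (if k' = (k + j) % n then psi n a k * psi n a k' else 0) := by
    intro k' hk'
    rw [Finset.mem_range] at hk'
    rw [if_congr (cond_iff n hn j k k' hk') rfl rfl]
  rw [Finset.sum_congr rfl this, Finset.sum_ite_eq' (Finset.range n) ((k + j) % n)]
  rw [if_pos (Finset.mem_range.mpr (Nat.mod_lt _ hn))]

lemma fact_mul_fact_le (u v : ℕ) :
    (Nat.factorial u * Nat.factorial v : ℕ) ≤ Nat.factorial (u + v) :=
  Nat.le_of_dvd (Nat.factorial_pos _) (Nat.factorial_mul_factorial_dvd_factorial_add u v)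

lemma pp_le {a : ℝ} (ha : 0 ≤ a) (ha1 : a ≤ 1) (j s t : ℕ) (hs : j + t ≤ s)
    (hexp : j + t + 1 ≤ s + t) :
    a ^ s / (Nat.factorial s : ℝ) * (a ^ t / (Nat.factorial t : ℝ)) ≤
      (a ^ j / (Nat.factorial j : ℝ)) * a * (a ^ t / (Nat.factorial t : ℝ)) := by
  have hfac : (Nat.factorial j * Nat.factorial t : ℝ) ≤ (Nat.factorial s : ℝ) := by
    have h1 : Nat.factorial j * Nat.factorial t ≤ Nat.factorial (j + t) := fact_mul_fact_le j t
    have h2 : Nat.factorial (j + t) ≤ Nat.factorial s := Nat.factorial_le hs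
    exact_mod_cast le_trans h1 h2
  have e1 : a ^ s / (Nat.factorial s : ℝ) * (a ^ t / (Nat.factorial t : ℝ))
      = a ^ (s + t) / ((Nat.factorial s : ℝ) * (Nat.factorial t : ℝ)) := by
    rw [pow_add, div_mul_div_comm]
  have e2 : (a ^ j / (Nat.factorial j : ℝ)) * a * (a ^ t / (Nat.factorial t : ℝ))
      = a ^ (j + t + 1) / ((Nat.factorial j : ℝ) * (Nat.factorial t : ℝ)) := by
    rw [pow_add, pow_add, pow_one]
    field_simp
  rw [e1, e2]
  apply div_le_div₀ (by positivity) (pow_le_pow_of_le_one ha ha1 hexp)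
    (by positivity)
  calc ((Nat.factorial j : ℝ) * (Nat.factorial t : ℝ))
      ≤ (Nat.factorial s : ℝ) := hfac
    _ ≤ (Nat.factorial s : ℝ) * (Nat.factorial t : ℝ) := by
        have h1 : (1:ℝ) ≤ (Nat.factorial t : ℝ) := by
          exact_mod_cast Nat.one_le_iff_ne_zero.mpr (Nat.factorial_ne_zero t)
        have h2 : (0:ℝ) < (Nat.factorial s : ℝ) := by positivity
        nlinarith

lemma sum_pp_le (n : ℕ) (hn : 0 < n) (a : ℝ) (ha : 0 ≤ a) (ha1 : a ≤ 1) (j : ℕ)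
    (h2j : 2 * j ≤ n) :
    ∑ k ∈ Finset.range n, a ^ k / (Nat.factorial k : ℝ) *
        (a ^ ((k + j) % n) / (Nat.factorial ((k + j) % n) : ℝ)) ≤
      a ^ j / (Nat.factorial j : ℝ) *
        (1 + (if 2 * j = n then (1:ℝ) else 0) +
          (if j = 0 then (1:ℝ) else 2) * (a * Real.exp a)) := by
  set p : ℕ → ℝ := fun k => a ^ k / (Nat.factorial k : ℝ) with hp
  have hppos : ∀ k, 0 ≤ p k := fun k => by simp only [hp]; positivity
  have hjn : j < n := by omega
  have hjn' : j ≤ n := hjn.le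
  -- split the sum
  rw [Finset.range_eq_Ico, ← Finset.sum_Ico_consecutive _ (Nat.zero_le (n - j)) (Nat.sub_le n j)]
  -- Part A
  have hA : ∑ k ∈ Finset.Ico 0 (n - j), p k * p ((k + j) % n) ≤
      p j * (1 + a * Real.exp a) := by
    have hmod : ∀ k ∈ Finset.Ico 0 (n - j), p k * p ((k + j) % n) = p k * p (k + j) := by
      intro k hk
      rw [Finset.mem_Ico] at hk
      rw [Nat.mod_eq_of_lt (by omega)]
    rw [Finset.sum_congr rfl hmod]
    rw [Finset.sum_eq_sum_Ico_succ_bot (by omega : 0 < n - j)]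
    have h0 : p 0 * p (0 + j) = p j := by simp [hp]
    rw [h0]
    have htail : ∑ k ∈ Finset.Ico 1 (n - j), p k * p (k + j) ≤ p j * (a * Real.exp a) := by
      calc ∑ k ∈ Finset.Ico 1 (n - j), p k * p (k + j)
          ≤ ∑ k ∈ Finset.Ico 1 (n - j), p j * a * p k := by
            apply Finset.sum_le_sum
            intro k hk
            rw [Finset.mem_Ico] at hk
            have := pp_le ha ha1 j (k + j) k (by omega) (by omega)
            calc p k * p (k + j) = p (k + j) * p k := by ring
              _ ≤ p j * a * p k := this
        _ = p j * a * ∑ k ∈ Finset.Ico 1 (n - j), p k := by rw [← Finset.mul_sum]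
        _ ≤ p j * a * Real.exp a := by
            have := sum_exp_terms_le ha (Finset.Ico 1 (n - j))
            have hnn : 0 ≤ p j * a := by
              have := hppos j
              positivity
            exact mul_le_mul_of_nonneg_left this hnn
        _ = p j * (a * Real.exp a) := by ring
    linarith [htail]
  -- Part B
  have hB : ∑ k ∈ Finset.Ico (n - j) n, p k * p ((k + j) % n) ≤
      p j * ((if 2 * j = n then (1:ℝ) else 0) + a * Real.exp a) := by
    rw [Finset.sum_Ico_eq_sum_range]
    have hjj : n - (n - j) = j := by omega
    rw [hjj]
    have hmod : ∀ m ∈ Finset.range j, p (n - j + m) * p ((n - j + m + j) % n) =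
        p (n - j + m) * p m := by
      intro m hm
      rw [Finset.mem_range] at hm
      congr 2
      have h1 : n - j + m + j = n + m := by omega
      rw [h1, Nat.add_mod_left, Nat.mod_eq_of_lt (by omega)]
    rw [Finset.sum_congr rfl hmod]
    by_cases h2 : 2 * j = n
    · -- peel m = 0
      have hj1 : 1 ≤ j := by omega
      rw [Finset.range_eq_Ico, Finset.sum_eq_sum_Ico_succ_bot (by omega : 0 < j)]
      have h0 : p (n - j + 0) * p 0 = p j := by
        have : n - j = j := by omega
        simp [this, hp]
      rw [h0, if_pos h2]
      have htail : ∑ m ∈ Finset.Ico 1 j, p (n - j + m) * p m ≤ p j * (a * Real.exp a) := by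
        calc ∑ m ∈ Finset.Ico 1 j, p (n - j + m) * p m
            ≤ ∑ m ∈ Finset.Ico 1 j, p j * a * p m := by
              apply Finset.sum_le_sum
              intro m hm
              rw [Finset.mem_Ico] at hm
              exact pp_le ha ha1 j (n - j + m) m (by omega) (by omega)
          _ = p j * a * ∑ m ∈ Finset.Ico 1 j, p m := by rw [← Finset.mul_sum]
          _ ≤ p j * a * Real.exp a := by
              have h3 := sum_exp_terms_le ha (Finset.Ico 1 j)
              have hnn : 0 ≤ p j * a := by have := hppos j; positivity
              exact mul_le_mul_of_nonneg_left h3 hnn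
          _ = p j * (a * Real.exp a) := by ring
      linarith [htail]
    · rw [if_neg h2]
      calc ∑ m ∈ Finset.range j, p (n - j + m) * p m
          ≤ ∑ m ∈ Finset.range j, p j * a * p m := by
            apply Finset.sum_le_sum
            intro m hm
            rw [Finset.mem_range] at hm
            exact pp_le ha ha1 j (n - j + m) m (by omega) (by omega)
        _ = p j * a * ∑ m ∈ Finset.range j, p m := by rw [← Finset.mul_sum]
        _ ≤ p j * a * Real.exp a := by
            have h3 := sum_exp_terms_le ha (Finset.range j)
            have hnn : 0 ≤ p j * a := by have := hppos j; positivity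
            exact mul_le_mul_of_nonneg_left h3 hnn
        _ = p j * (0 + a * Real.exp a) := by ring
  -- combine
  have hcomb := add_le_add hA hB
  by_cases hj0 : j = 0
  · subst hj0
    have hB0 : ∑ k ∈ Finset.Ico (n - 0) n, p k * p ((k + 0) % n) = 0 := by
      simp
    rw [hB0] at *
    have h2n : ¬ (2 * 0 = n) := by omega
    rw [if_pos rfl, if_neg h2n]
    have := hA
    rw [show (n - 0) = n from by omega] at this
    calc ∑ k ∈ Finset.Ico 0 (n - 0), p k * p ((k + 0) % n) + 0
        = ∑ k ∈ Finset.Ico 0 (n - 0), p k * p ((k + 0) % n) := by ring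
      _ ≤ p 0 * (1 + a * Real.exp a) := hA
      _ = p 0 * (1 + 0 + 1 * (a * Real.exp a)) := by ring
  · rw [if_neg hj0]
    calc ∑ k ∈ Finset.Ico 0 (n - j), p k * p ((k + j) % n) +
          ∑ k ∈ Finset.Ico (n - j) n, p k * p ((k + j) % n)
        ≤ p j * (1 + a * Real.exp a) +
          p j * ((if 2 * j = n then (1:ℝ) else 0) + a * Real.exp a) := hcomb
      _ = p j * (1 + (if 2 * j = n then (1:ℝ) else 0) + 2 * (a * Real.exp a)) := by ring


lemma Phi_pos (n : ℕ) (hn : 0 < n) (a : ℝ) (ha : 0 < a) (j : ℕ) : 0 < Phi n a j := by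
  apply Finset.sum_pos
  · intro k _
    exact mul_pos (psi_pos n hn a ha k) (psi_pos n hn a ha _)
  · exact Finset.nonempty_range_iff.mpr (by omega)

lemma Phi_ge (n : ℕ) (hn : 0 < n) (a : ℝ) (ha : 0 ≤ a) (j : ℕ) (hj : j < n) :
    a ^ j / (Nat.factorial j : ℝ) ≤ Phi n a j := by
  have h0 : a ^ j / (Nat.factorial j : ℝ) ≤ psi n a 0 * psi n a ((0 + j) % n) := by
    have h1 : (0 + j) % n = j := by rw [Nat.zero_add, Nat.mod_eq_of_lt hj]
    rw [h1]
    have h2 : (1:ℝ) ≤ psi n a 0 := by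
      have := psi_ge n hn a ha 0
      simpa using this
    have h3 := psi_ge n hn a ha j
    have h4 : 0 ≤ a ^ j / (Nat.factorial j : ℝ) := by positivity
    nlinarith
  calc a ^ j / (Nat.factorial j : ℝ) ≤ psi n a 0 * psi n a ((0 + j) % n) := h0
    _ ≤ Phi n a j := by
        apply Finset.single_le_sum (f := fun k => psi n a k * psi n a ((k + j) % n))
        · intro k _
          have h5 : (0:ℝ) ≤ psi n a k := le_trans (by positivity) (psi_ge n hn a ha k)
          have h6 : (0:ℝ) ≤ psi n a ((k + j) % n) :=
            le_trans (by positivity) (psi_ge n hn a ha _)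
          exact mul_nonneg h5 h6
        · exact Finset.mem_range.mpr (by omega)

lemma Phi_le (n : ℕ) (hn : 0 < n) (a : ℝ) (ha : 0 ≤ a) (ha1 : a ≤ 1) (j : ℕ)
    (h2j : 2 * j ≤ n) :
    Phi n a j ≤ a ^ j / (Nat.factorial j : ℝ) *
        (1 + (if 2 * j = n then (1:ℝ) else 0) +
          (if j = 0 then (1:ℝ) else 2) * (a * Real.exp a)) *
        (1 + a ^ n * Real.exp a / (Nat.factorial n : ℝ)) ^ 2 := by
  set D : ℝ := 1 + a ^ n * Real.exp a / (Nat.factorial n : ℝ) with hD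
  have hD1 : (1:ℝ) ≤ D := by
    rw [hD]
    have h0 : (0:ℝ) ≤ a ^ n * Real.exp a / (Nat.factorial n : ℝ) := by positivity
    linarith
  have step1 : Phi n a j ≤ ∑ k ∈ Finset.range n,
      (a ^ k / (Nat.factorial k : ℝ) * (a ^ ((k + j) % n) / (Nat.factorial ((k + j) % n) : ℝ)))
        * D ^ 2 := by
    apply Finset.sum_le_sum
    intro k _
    have h1 := psi_le n hn a ha k
    have h2 := psi_le n hn a ha ((k + j) % n)
    have h3 := psi_ge n hn a ha k
    have h4 := psi_ge n hn a ha ((k + j) % n)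
    have hpk : (0:ℝ) ≤ a ^ k / (Nat.factorial k : ℝ) := by positivity
    have hpk' : (0:ℝ) ≤ a ^ ((k + j) % n) / (Nat.factorial ((k + j) % n) : ℝ) := by positivity
    have h5 : (0:ℝ) ≤ psi n a k := le_trans hpk h3
    calc psi n a k * psi n a ((k + j) % n)
        ≤ (a ^ k / (Nat.factorial k : ℝ) * D) *
            (a ^ ((k + j) % n) / (Nat.factorial ((k + j) % n) : ℝ) * D) := by
          apply mul_le_mul h1 h2 (le_trans hpk' h4) (by positivity)
      _ = (a ^ k / (Nat.factorial k : ℝ) *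
            (a ^ ((k + j) % n) / (Nat.factorial ((k + j) % n) : ℝ))) * D ^ 2 := by ring
  rw [← Finset.sum_mul] at step1
  have step2 := sum_pp_le n hn a ha ha1 j h2j
  calc Phi n a j ≤ _ := step1
    _ ≤ _ := by
        apply mul_le_mul_of_nonneg_right step2 (by positivity)

-- numeric key lemma
lemma key_ineq {a : ℝ} (ha : 0 < a) (ha1 : a ≤ 1) {n : ℕ} (hn : 4 ≤ n) :
    (1 + a * Real.exp a) * (1 + a ^ n * Real.exp a / (Nat.factorial n : ℝ)) ^ 2 ≤
      1 + 2 * (a * Real.exp a) := by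
  set E := a * Real.exp a with hE
  set d := a ^ n * Real.exp a / (Nat.factorial n : ℝ) with hd
  have hEpos : 0 < E := by positivity
  have hdpos : 0 ≤ d := by positivity
  have hfac : (24 : ℝ) ≤ (Nat.factorial n : ℝ) := by
    have : (24 : ℕ) ≤ Nat.factorial n := by
      calc (24 : ℕ) = Nat.factorial 4 := by norm_num [Nat.factorial]
        _ ≤ Nat.factorial n := Nat.factorial_le hn
    exact_mod_cast this
  have hpow : a ^ n ≤ a := by
    calc a ^ n ≤ a ^ 1 := pow_le_pow_of_le_one ha.le ha1 (by omega)
      _ = a := pow_one a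
  have hd24 : 24 * d ≤ E := by
    have hfp : (0:ℝ) < (Nat.factorial n : ℝ) := by positivity
    have hX : (0:ℝ) ≤ a ^ n * Real.exp a := by positivity
    have e1 : 24 * d = (a ^ n * Real.exp a) * (24 / (Nat.factorial n : ℝ)) := by
      rw [hd]; ring
    have e2 : 24 / (Nat.factorial n : ℝ) ≤ 1 := by
      rw [div_le_one hfp]; exact hfac
    have e3 : (a ^ n * Real.exp a) * (24 / (Nat.factorial n : ℝ)) ≤ a ^ n * Real.exp a := by
      nlinarith
    have e4 : a ^ n * Real.exp a ≤ a * Real.exp a :=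
      mul_le_mul_of_nonneg_right hpow (Real.exp_pos a).le
    rw [e1, hE]; linarith
  have hE3 : E ≤ 3 := by
    rw [hE]
    have h1 : Real.exp a ≤ Real.exp 1 := Real.exp_le_exp.mpr ha1
    have h2 : Real.exp 1 < 2.7182818286 := Real.exp_one_lt_d9
    nlinarith [Real.exp_pos a]
  nlinarith [sq_nonneg d, mul_nonneg hdpos hdpos, mul_nonneg (mul_nonneg hdpos hdpos) hdpos]

lemma hstep_abs (E v I : ℝ) (hE : 0 < E) (hv : 1 ≤ v)
    (hkey : (1 + E) * v ≤ 1 + 2 * E) (hI : I = 0 ∨ I = 1) :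
    (1 + I + 2 * E) * v * ((1 + E) * v) <
      (1 + ((1 + 2 * E) * v - 1)) * (1 + I + ((1 + 2 * E) * v - 1)) := by
  have hv0 : (0:ℝ) < v := by linarith
  have h12E : (0:ℝ) < 1 + 2 * E := by linarith
  have hdiff : (0:ℝ) < (1 + 2 * E) * (v * v) * E := by positivity
  have hkv : (1 + E) * v * v ≤ (1 + 2 * E) * v := mul_le_mul_of_nonneg_right hkey hv0.le
  rcases hI with h | h <;> subst h <;> nlinarith [hdiff, hkv]

lemma eta_lt_main (n : ℕ) (hn : 4 ≤ n) (a : ℝ) (ha : 0 < a)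
    (h : a * (1 + eps n a) ≤ 1)
    (hexists : ∃ j : ℕ, 1 ≤ j ∧ j ≤ n / 2 - 1 ∧
      (1 + eps n a) * (1 + (if 2 * (j + 1) = n then (1 : ℝ) else 0) + eps n a) ≤ (j : ℝ) + 1) :
    eta n a < Phi n a 1 / Phi n a 0 := by
  obtain ⟨j, hj1, hj2, hjkey⟩ := hexists
  have hn0 : 0 < n := by omega
  set E := a * Real.exp a with hE
  set d := a ^ n * Real.exp a / (Nat.factorial n : ℝ) with hd
  have hEpos : 0 < E := by positivity
  have hdnn : 0 ≤ d := by positivity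
  have hepsnn : 0 ≤ eps n a := by
    rw [eps]
    nlinarith [sq_nonneg (1 + d)]
  have ha1 : a ≤ 1 := by nlinarith
  have hkey := key_ineq ha ha1 hn
  -- bounds
  have h2j1 : 2 * (j + 1) ≤ n := by omega
  have hjn : j < n := by omega
  have hj1n : j + 1 < n := by omega
  set I : ℝ := if 2 * (j + 1) = n then (1:ℝ) else 0 with hI
  have hPhi0_le : Phi n a 0 ≤ (1 + E) * (1 + d) ^ 2 := by
    have h' := Phi_le n hn0 a ha.le ha1 0 (by omega)
    rw [if_neg (by omega : ¬ (2 * 0 = n)), if_pos rfl] at h'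
    calc Phi n a 0 ≤ _ := h'
      _ = (1 + E) * (1 + d) ^ 2 := by rw [hE, hd]; norm_num
  have hPhij1_le : Phi n a (j + 1) ≤
      a ^ (j+1) / (Nat.factorial (j+1) : ℝ) * (1 + I + 2 * E) * (1 + d) ^ 2 := by
    have := Phi_le n hn0 a ha.le ha1 (j + 1) h2j1
    rw [if_neg (by omega : ¬ (j + 1 = 0))] at this
    exact this
  have hPhi1_ge : a ≤ Phi n a 1 := by
    have := Phi_ge n hn0 a ha.le 1 (by omega)
    simpa using this
  have hPhij_ge : a ^ j / (Nat.factorial j : ℝ) ≤ Phi n a j := Phi_ge n hn0 a ha.le j hjn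
  -- cross inequality
  have hcross : Phi n a (j+1) * Phi n a 0 < Phi n a 1 * Phi n a j := by
    have hpj1pos : (0:ℝ) < a ^ (j+1) / (Nat.factorial (j+1) : ℝ) := by positivity
    have hnum : (1 + I + 2 * E) * (1 + d) ^ 2 * ((1 + E) * (1 + d) ^ 2) < (j:ℝ) + 1 := by
      have heps : eps n a = (1 + 2 * E) * (1 + d) ^ 2 - 1 := by
        rw [eps, hE, hd]; ring
      have hv1 : (1:ℝ) ≤ (1 + d) ^ 2 := by nlinarith
      have hstep : (1 + I + 2 * E) * (1 + d) ^ 2 * ((1 + E) * (1 + d) ^ 2) <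
          (1 + eps n a) * (1 + I + eps n a) := by
        rw [heps]
        have hIcase : I = 0 ∨ I = 1 := by
          rw [hI]
          by_cases hc : 2 * (j + 1) = n
          · right; rw [if_pos hc]
          · left; rw [if_neg hc]
        have := hstep_abs E ((1 + d) ^ 2) I hEpos hv1 (by rw [hE, hd]; exact hkey) hIcase
        calc (1 + I + 2 * E) * (1 + d) ^ 2 * ((1 + E) * (1 + d) ^ 2) < _ := this
          _ = (1 + ((1 + 2 * E) * (1 + d) ^ 2 - 1)) *
              (1 + I + ((1 + 2 * E) * (1 + d) ^ 2 - 1)) := rfl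
      calc (1 + I + 2 * E) * (1 + d) ^ 2 * ((1 + E) * (1 + d) ^ 2)
          < (1 + eps n a) * (1 + I + eps n a) := hstep
        _ ≤ (j:ℝ) + 1 := by rw [hI]; exact hjkey
    have hfin : a ^ (j+1) / (Nat.factorial (j+1) : ℝ) * ((j:ℝ) + 1) =
        a * (a ^ j / (Nat.factorial j : ℝ)) := by
      rw [Nat.factorial_succ]
      push_cast
      field_simp
      ring
    calc Phi n a (j+1) * Phi n a 0
        ≤ (a ^ (j+1) / (Nat.factorial (j+1) : ℝ) * (1 + I + 2 * E) * (1 + d) ^ 2) *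
            ((1 + E) * (1 + d) ^ 2) := by
          apply mul_le_mul hPhij1_le hPhi0_le (Phi_pos n hn0 a ha 0).le
          positivity
      _ = a ^ (j+1) / (Nat.factorial (j+1) : ℝ) *
            ((1 + I + 2 * E) * (1 + d) ^ 2 * ((1 + E) * (1 + d) ^ 2)) := by ring
      _ < a ^ (j+1) / (Nat.factorial (j+1) : ℝ) * ((j:ℝ) + 1) := by
          exact mul_lt_mul_of_pos_left hnum hpj1pos
      _ = a * (a ^ j / (Nat.factorial j : ℝ)) := hfin
      _ ≤ Phi n a 1 * Phi n a j := by
          apply mul_le_mul hPhi1_ge hPhij_ge (by positivity) (Phi_pos n hn0 a ha 1).le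
  -- ratios
  have hP0 := Phi_pos n hn0 a ha 0
  have hPj := Phi_pos n hn0 a ha j
  have hPj1 := Phi_pos n hn0 a ha (j+1)
  have hP1 := Phi_pos n hn0 a ha 1
  have hratio : Phi n a (j+1) / Phi n a j < Phi n a 1 / Phi n a 0 := by
    rw [div_lt_div_iff₀ hPj hP0]
    nlinarith [hcross]
  have hmem : phi n a ((j : ℤ) + 1) / phi n a (j : ℤ) ∈
      ((fun j : ℕ => phi n a ((j : ℤ) + 1) / phi n a (j : ℤ)) '' Set.Iio n) :=
    ⟨j, hjn, rfl⟩
  have hbdd : BddBelow ((fun j : ℕ => phi n a ((j : ℤ) + 1) / phi n a (j : ℤ)) '' Set.Iio n) :=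
    (Set.Finite.image _ (Set.finite_Iio n)).bddBelow
  have hle : eta n a ≤ phi n a ((j : ℤ) + 1) / phi n a (j : ℤ) := csInf_le hbdd hmem
  have hphi_eq : phi n a ((j : ℤ) + 1) / phi n a (j : ℤ) = Phi n a (j+1) / Phi n a j := by
    have e1 : ((j : ℤ) + 1) = ((j + 1 : ℕ) : ℤ) := by push_cast; ring
    have e0 : (0 : ℤ) = ((0 : ℕ) : ℤ) := rfl
    rw [phi, phi, e1, e0, phiHat_eq_Phi n hn0 a (j+1), phiHat_eq_Phi n hn0 a j,
      phiHat_eq_Phi n hn0 a 0]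
    field_simp
  calc eta n a ≤ phi n a ((j : ℤ) + 1) / phi n a (j : ℤ) := hle
    _ = Phi n a (j+1) / Phi n a j := hphi_eq
    _ < Phi n a 1 / Phi n a 0 := hratio

lemma rho_pow_n (n : ℕ) (hn : 0 < n) (g : ℕ) : (rho n g) ^ n = 1 := by
  rw [rho, ← Complex.exp_nat_mul]
  have hne : (n : ℂ) ≠ 0 := Nat.cast_ne_zero.mpr (by omega)
  have : (n : ℂ) * (2 * (Real.pi : ℂ) * Complex.I * (g : ℂ) / (n : ℂ))
      = (g : ℂ) * (2 * (Real.pi : ℂ) * Complex.I) := by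
    field_simp
  rw [this, Complex.exp_nat_mul, Complex.exp_two_pi_mul_I, one_pow]

lemma rho_ne_zero (n : ℕ) (g : ℕ) : rho n g ≠ 0 := Complex.exp_ne_zero _

lemma conj_rho (n : ℕ) (hn : 0 < n) (g : ℕ) :
    (starRingEnd ℂ) (rho n g) = (rho n g) ^ (n - 1) := by
  have h1 : rho n g * (starRingEnd ℂ) (rho n g) = 1 := by
    rw [rho, ← Complex.exp_conj]
    rw [← Complex.exp_add]
    have : (2 * (Real.pi : ℂ) * Complex.I * (g : ℂ) / (n : ℂ)) +
        (starRingEnd ℂ) (2 * (Real.pi : ℂ) * Complex.I * (g : ℂ) / (n : ℂ)) = 0 := by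
      simp [map_div₀, map_mul, Complex.conj_I, map_ofNat]
      ring
    rw [this, Complex.exp_zero]
  have h2 : rho n g * (rho n g) ^ (n - 1) = 1 := by
    rw [← pow_succ']
    have : n - 1 + 1 = n := by omega
    rw [this, rho_pow_n n hn g]
  have h3 := rho_ne_zero n g
  rw [← h1] at h2
  exact (mul_left_cancel₀ h3 h2).symm

lemma sum_rho_pow (n : ℕ) (hn : 0 < n) (m : ℕ) :
    ∑ g ∈ Finset.range n, (rho n g) ^ m = if n ∣ m then (n : ℂ) else 0 := by
  have hne : (n : ℂ) ≠ 0 := Nat.cast_ne_zero.mpr (by omega)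
  set w : ℂ := Complex.exp (2 * (Real.pi : ℂ) * Complex.I * (m : ℂ) / (n : ℂ)) with hw
  have hpow : ∀ g : ℕ, (rho n g) ^ m = w ^ g := by
    intro g
    rw [rho, hw, ← Complex.exp_nat_mul, ← Complex.exp_nat_mul]
    congr 1
    ring
  rw [Finset.sum_congr rfl (fun g _ => hpow g)]
  have hwn : w ^ n = 1 := by
    rw [hw, ← Complex.exp_nat_mul]
    have : (n : ℂ) * (2 * (Real.pi : ℂ) * Complex.I * (m : ℂ) / (n : ℂ))
        = (m : ℂ) * (2 * (Real.pi : ℂ) * Complex.I) := by field_simp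
    rw [this, Complex.exp_nat_mul, Complex.exp_two_pi_mul_I, one_pow]
  by_cases hdvd : n ∣ m
  · rw [if_pos hdvd]
    obtain ⟨c, hc⟩ := hdvd
    have hw1 : w = 1 := by
      rw [hw]
      have : 2 * (Real.pi : ℂ) * Complex.I * (m : ℂ) / (n : ℂ)
          = (c : ℂ) * (2 * (Real.pi : ℂ) * Complex.I) := by
        rw [hc]
        push_cast
        field_simp
      rw [this, Complex.exp_nat_mul, Complex.exp_two_pi_mul_I, one_pow]
    simp [hw1]
  · rw [if_neg hdvd]
    have hwne : w ≠ 1 := by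
      intro hw1
      rw [hw, Complex.exp_eq_one_iff] at hw1
      obtain ⟨k, hk⟩ := hw1
      have h2pi : (2 * (Real.pi : ℂ) * Complex.I) ≠ 0 := by
        simp [Complex.ofReal_ne_zero, Real.pi_ne_zero, Complex.I_ne_zero]
      have hmk : (m : ℂ) = (k : ℂ) * (n : ℂ) := by
        have h1 : 2 * (Real.pi : ℂ) * Complex.I * (m : ℂ)
            = (k : ℂ) * (2 * (Real.pi : ℂ) * Complex.I) * (n : ℂ) := by
          field_simp at hk
          linear_combination (2 * (Real.pi : ℂ) * Complex.I) * hk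
        have h2 : (2 * (Real.pi : ℂ) * Complex.I) * ((m : ℂ) - (k : ℂ) * (n : ℂ)) = 0 := by
          linear_combination h1
        rcases mul_eq_zero.mp h2 with h | h
        · exact absurd h h2pi
        · linear_combination h
      have hmk' : (m : ℤ) = k * (n : ℤ) := by
        exact_mod_cast hmk
      apply hdvd
      have : (n : ℤ) ∣ (m : ℤ) := ⟨k, by linarith⟩
      exact_mod_cast this
    have hgeom : ∑ g ∈ Finset.range n, w ^ g = (w ^ n - 1) / (w - 1) := geom_sum_eq hwne n
    rw [hgeom, hwn]
    simp

def resEquiv (n : ℕ) (hn : 0 < n) : Fin n × ℕ ≃ ℕ where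
  toFun p := (p.1 : ℕ) + p.2 * n
  invFun t := (⟨t % n, Nat.mod_lt t hn⟩, t / n)
  left_inv := by
    rintro ⟨⟨k, hk⟩, m⟩
    have h1 : (k + m * n) % n = k := by
      rw [Nat.add_mul_mod_self_right, Nat.mod_eq_of_lt hk]
    have h2 : (k + m * n) / n = m := by
      rw [Nat.add_mul_div_right _ _ hn, Nat.div_eq_of_lt hk, Nat.zero_add]
    simp [h1, h2]
  right_inv := by
    intro t
    simp [Nat.mod_add_div']

lemma exp_expand (n : ℕ) (hn : 0 < n) (a : ℝ) (z : ℂ) (hz : z ^ n = 1) :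
    Complex.exp ((a : ℂ) * z) = ∑ k ∈ Finset.range n, (psi n a k : ℂ) * z ^ k := by
  have hf : Summable (fun t : ℕ => ((a : ℂ) * z) ^ t / (Nat.factorial t : ℂ)) :=
    NormedSpace.expSeries_div_summable ((a : ℂ) * z)
  have hexp : Complex.exp ((a : ℂ) * z) = ∑' t : ℕ, ((a : ℂ) * z) ^ t / (Nat.factorial t : ℂ) := by
    rw [Complex.exp_eq_exp_ℂ, NormedSpace.exp_eq_tsum_div]
  have hcomp : Summable (fun p : Fin n × ℕ =>
      ((a : ℂ) * z) ^ ((p.1 : ℕ) + p.2 * n) / (Nat.factorial ((p.1 : ℕ) + p.2 * n) : ℂ)) := by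
    have := hf.comp_injective (resEquiv n hn).injective
    exact this
  have h1 : Complex.exp ((a : ℂ) * z) = ∑' p : Fin n × ℕ,
      ((a : ℂ) * z) ^ ((p.1 : ℕ) + p.2 * n) / (Nat.factorial ((p.1 : ℕ) + p.2 * n) : ℂ) := by
    rw [hexp, ← Equiv.tsum_eq (resEquiv n hn)
      (fun t => ((a : ℂ) * z) ^ t / (Nat.factorial t : ℂ))]
    rfl
  have hinner : ∀ k : Fin n, Summable (fun m : ℕ =>
      ((a : ℂ) * z) ^ ((k : ℕ) + m * n) / (Nat.factorial ((k : ℕ) + m * n) : ℂ)) := by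
    intro k
    exact hcomp.comp_injective (i := fun m => ((k, m) : Fin n × ℕ))
      (fun x y hxy => by simpa using hxy)
  rw [h1, Summable.tsum_prod' hcomp hinner, tsum_fintype]
  rw [← Fin.sum_univ_eq_sum_range (fun k => (psi n a k : ℂ) * z ^ k) n]
  apply Finset.sum_congr rfl
  intro k _
  have hterm : ∀ m : ℕ, ((a : ℂ) * z) ^ ((k : ℕ) + m * n) / (Nat.factorial ((k : ℕ) + m * n) : ℂ)
      = ((a ^ ((k : ℕ) + m * n) / (Nat.factorial ((k : ℕ) + m * n) : ℝ) : ℝ) : ℂ) * z ^ (k : ℕ) := by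
    intro m
    have hzz : z ^ ((k : ℕ) + m * n) = z ^ (k : ℕ) := by
      rw [pow_add, mul_comm m n, pow_mul, hz, one_pow, mul_one]
    rw [mul_pow, hzz]
    push_cast
    ring
  rw [tsum_congr hterm, tsum_mul_right, ← Complex.ofReal_tsum]
  rfl

-- divisibility condition lemma
lemma dvd_iff_eq_mod (n : ℕ) (hn : 0 < n) (j k' k : ℕ) (hk : k < n) :
    (n ∣ j + k' + (n - 1) * k) ↔ k = (k' + j) % n := by
  have h1 : (n ∣ j + k' + (n - 1) * k) ↔ ((j + k' + (n - 1) * k : ℕ) : ZMod n) = 0 :=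
    (ZMod.natCast_eq_zero_iff _ n).symm
  rw [h1]
  have h2 : ((j + k' + (n - 1) * k : ℕ) : ZMod n) = (j : ZMod n) + k' - k := by
    push_cast [Nat.cast_sub (by omega : 1 ≤ n)]
    simp [ZMod.natCast_self]
    ring
  rw [h2]
  constructor
  · intro h
    have h3 : ((k : ℕ) : ZMod n) = ((k' + j : ℕ) : ZMod n) := by
      push_cast
      linear_combination -h
    rw [ZMod.natCast_eq_natCast_iff'] at h3
    rw [Nat.mod_eq_of_lt hk] at h3
    exact h3
  · intro h
    have h3 : ((k : ℕ) : ZMod n) = ((k' + j : ℕ) : ZMod n) := by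
      rw [ZMod.natCast_eq_natCast_iff', Nat.mod_eq_of_lt hk]
      exact h
    push_cast at h3
    linear_combination -h3

lemma sum_rho_exp (n : ℕ) (hn : 0 < n) (a : ℝ) (j : ℕ) :
    ∑ g ∈ Finset.range n, (rho n g) ^ j * ((Real.exp (2 * a * (rho n g).re)) : ℂ)
      = (n : ℂ) * ((Phi n a j : ℝ) : ℂ) := by
  -- step 1: rewrite the real exponential as a product of two complex exponentials
  have hsplit : ∀ g : ℕ, ((Real.exp (2 * a * (rho n g).re)) : ℂ)
      = Complex.exp ((a : ℂ) * rho n g) * Complex.exp ((a : ℂ) * (rho n g) ^ (n - 1)) := by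
    intro g
    rw [Complex.ofReal_exp, ← Complex.exp_add]
    congr 1
    have h1 : ((2 * a * (rho n g).re : ℝ) : ℂ) = (a : ℂ) * (rho n g + (starRingEnd ℂ) (rho n g)) := by
      rw [Complex.add_conj]
      push_cast
      ring
    rw [h1, conj_rho n hn g]
    ring
  -- step 2: expand both exponentials
  have hconjn : ∀ g : ℕ, ((rho n g) ^ (n - 1)) ^ n = 1 := by
    intro g
    rw [← pow_mul, mul_comm (n-1) n, pow_mul, rho_pow_n n hn g, one_pow]
  have hexpand : ∀ g : ℕ, (rho n g) ^ j * ((Real.exp (2 * a * (rho n g).re)) : ℂ)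
      = ∑ k' ∈ Finset.range n, ∑ k ∈ Finset.range n,
          ((psi n a k' : ℝ) : ℂ) * ((psi n a k : ℝ) : ℂ) * (rho n g) ^ (j + k' + (n - 1) * k) := by
    intro g
    rw [hsplit g, exp_expand n hn a (rho n g) (rho_pow_n n hn g),
      exp_expand n hn a ((rho n g) ^ (n - 1)) (hconjn g)]
    rw [Finset.sum_mul_sum, Finset.mul_sum]
    apply Finset.sum_congr rfl
    intro k' _
    rw [Finset.mul_sum]
    apply Finset.sum_congr rfl
    intro k _
    rw [← pow_mul, pow_add, pow_add]
    ring
  rw [Finset.sum_congr rfl (fun g _ => hexpand g)]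
  rw [Finset.sum_comm]
  have hswap : ∀ k' ∈ Finset.range n,
      ∑ g ∈ Finset.range n, ∑ k ∈ Finset.range n,
          ((psi n a k' : ℝ) : ℂ) * ((psi n a k : ℝ) : ℂ) * (rho n g) ^ (j + k' + (n - 1) * k)
      = ((psi n a k' : ℝ) : ℂ) * ((psi n a ((k' + j) % n) : ℝ) : ℂ) * (n : ℂ) := by
    intro k' _
    rw [Finset.sum_comm]
    have hinner : ∀ k ∈ Finset.range n,
        ∑ g ∈ Finset.range n,
          ((psi n a k' : ℝ) : ℂ) * ((psi n a k : ℝ) : ℂ) * (rho n g) ^ (j + k' + (n - 1) * k)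
        = if k = (k' + j) % n then ((psi n a k' : ℝ) : ℂ) * ((psi n a k : ℝ) : ℂ) * (n : ℂ) else 0 := by
      intro k hk
      rw [Finset.mem_range] at hk
      rw [← Finset.mul_sum, sum_rho_pow n hn (j + k' + (n - 1) * k)]
      by_cases hc : k = (k' + j) % n
      · rw [if_pos ((dvd_iff_eq_mod n hn j k' k hk).mpr hc), if_pos hc]
      · rw [if_neg (fun h => hc ((dvd_iff_eq_mod n hn j k' k hk).mp h)), if_neg hc, mul_zero]
    rw [Finset.sum_congr rfl hinner, Finset.sum_ite_eq' (Finset.range n) ((k' + j) % n)]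
    rw [if_pos (Finset.mem_range.mpr (Nat.mod_lt _ hn))]
  rw [Finset.sum_congr rfl hswap]
  rw [Phi, Complex.ofReal_sum]
  rw [Finset.mul_sum]
  apply Finset.sum_congr rfl
  intro k' _
  push_cast
  ring

open scoped ComplexOrder in
theorem statement14 (n : ℕ) (hn : 4 ≤ n) (a : ℝ) (ha : 0 < a)
    (h : a * (1 + eps n a) ≤ 1)
    (hexists : ∃ j : ℕ, 1 ≤ j ∧ j ≤ n / 2 - 1 ∧
      (1 + eps n a) * (1 + (if 2 * (j + 1) = n then (1 : ℝ) else 0) + eps n a) ≤ (j : ℝ) + 1) :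
    (eta n a : ℂ) < etaHat n a := by
  have hn0 : 0 < n := by omega
  have hetalt := eta_lt_main n hn a ha h hexists
  have hnum := sum_rho_exp n hn0 a 1
  have hden := sum_rho_exp n hn0 a 0
  have hnum' : ∑ g ∈ Finset.range n, rho n g * ((Real.exp (2 * a * (rho n g).re)) : ℂ)
      = (n : ℂ) * ((Phi n a 1 : ℝ) : ℂ) := by
    rw [← hnum]
    apply Finset.sum_congr rfl
    intro g _
    rw [pow_one]
  have hden' : ∑ g ∈ Finset.range n, ((Real.exp (2 * a * (rho n g).re)) : ℂ)
      = (n : ℂ) * ((Phi n a 0 : ℝ) : ℂ) := by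
    rw [← hden]
    apply Finset.sum_congr rfl
    intro g _
    rw [pow_zero, one_mul]
  have hPhi0pos := Phi_pos n hn0 a ha 0
  have hncne : (n : ℂ) ≠ 0 := Nat.cast_ne_zero.mpr (by omega)
  have hPhi0ne : ((Phi n a 0 : ℝ) : ℂ) ≠ 0 := by
    exact_mod_cast Complex.ofReal_ne_zero.mpr (ne_of_gt hPhi0pos)
  have hetaHat : etaHat n a = ((Phi n a 1 / Phi n a 0 : ℝ) : ℂ) := by
    rw [etaHat, hnum', hden', Complex.ofReal_div]
    rw [mul_div_mul_left _ _ hncne]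
  rw [hetaHat]
  exact_mod_cast Complex.real_lt_real.mpr hetalt
end

section
/- Let m ≥ 2, L ≥ 1, P ≥ 0 be integers and let ζ ≥ 0 and ξ ∈ (0,1) be real numbers with (16m)^2·ζ < ξ. Define B₂ := ∑_{i=0}^{P} ∑_{j=max(2i+1,2)}^{L} (j−1)·C(L, j−2i−1)·C(P, i)·∑_{k'=max(j,2j−2i)}^{∞} (16m)^{2(j−i)}·ζ^{j−i}·ξ^{L+k'−2j}. Then B₂ ≤ [ξ^L·(16m)^4·ζ/(1−ξ)]·(L·ζ + 2P·ζ·ξ^{−2})·(1+(16m)^2·ζ·ξ^{−2})^P·(1+(16m)^2·ζ)^L. -/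
open scoped BigOperators

lemma binom_sum (n : ℕ) (a : ℝ) :
    ∑ k ∈ Finset.range (n+1), (n.choose k : ℝ) * a ^ k = (1 + a) ^ n := by
  rw [add_comm (1:ℝ) a, add_pow]
  exact Finset.sum_congr rfl fun k _ => by simp [mul_comm]

lemma mul_choose_sum_le (n : ℕ) (a : ℝ) (ha : 0 ≤ a) :
    ∑ k ∈ Finset.range (n+1), (k : ℝ) * (n.choose k : ℝ) * a ^ k
      ≤ (n : ℝ) * a * (1 + a) ^ n := by
  cases n with
  | zero => simp
  | succ m =>
    rw [Finset.sum_range_succ']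
    have key : ∀ t : ℕ, ((t:ℝ)+1) * ((m+1).choose (t+1) : ℝ) = ((m:ℝ)+1) * (m.choose t : ℝ) := by
      intro t
      have h' : ((m+1) * m.choose t : ℕ) = ((m+1).choose (t+1) * (t+1) : ℕ) :=
        Nat.add_one_mul_choose_eq m t
      have := congrArg (Nat.cast (R := ℝ)) h'
      push_cast at this
      linarith [this]
    have heq : ∑ t ∈ Finset.range (m+1),
        ((↑(t+1) : ℝ) * ((m+1).choose (t+1) : ℝ) * a ^ (t+1))
        = ((m:ℝ)+1) * a * ∑ t ∈ Finset.range (m+1), (m.choose t : ℝ) * a ^ t := by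
      rw [Finset.mul_sum]
      refine Finset.sum_congr rfl fun t _ => ?_
      push_cast
      rw [show ((t:ℝ)+1) * ((m+1).choose (t+1) : ℝ) * a ^ (t+1)
          = (((t:ℝ)+1) * ((m+1).choose (t+1) : ℝ)) * a^(t+1) by ring, key t]
      ring
    simp only [Nat.cast_zero, zero_mul, add_zero]
    rw [heq, binom_sum]
    have h1 : (1:ℝ) ≤ 1 + a := by linarith
    have h2 : (1+a)^m ≤ (1+a)^(m+1) := pow_le_pow_right₀ h1 (Nat.le_succ m)
    have h3 : 0 ≤ ((m:ℝ)+1) * a := by positivity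
    calc ((m:ℝ)+1) * a * (1+a)^m ≤ ((m:ℝ)+1) * a * (1+a)^(m+1) :=
          mul_le_mul_of_nonneg_left h2 h3
      _ = (↑(m+1) : ℝ) * a * (1+a)^(m+1) := by push_cast; ring

lemma weighted_sum_le (n : ℕ) (a c : ℝ) (ha : 0 ≤ a) :
    ∑ k ∈ Finset.range (n+1), ((k : ℝ) + c) * (n.choose k : ℝ) * a ^ k
      ≤ ((n : ℝ) * a + c) * (1 + a) ^ n := by
  have hsplit : ∑ k ∈ Finset.range (n+1), ((k : ℝ) + c) * (n.choose k : ℝ) * a ^ k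
      = (∑ k ∈ Finset.range (n+1), (k : ℝ) * (n.choose k : ℝ) * a ^ k)
        + c * ∑ k ∈ Finset.range (n+1), (n.choose k : ℝ) * a ^ k := by
    rw [Finset.mul_sum, ← Finset.sum_add_distrib]
    exact Finset.sum_congr rfl fun k _ => by ring
  rw [hsplit, binom_sum]
  have h1 := mul_choose_sum_le n a ha
  have expand : ((n:ℝ)*a + c) * (1+a)^n = (n:ℝ)*a*(1+a)^n + c*(1+a)^n := by ring
  linarith

theorem statement18 (m L P : ℕ) (hm : 2 ≤ m) (hL : 1 ≤ L) (ζ ξ : ℝ)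
    (hζ : 0 ≤ ζ) (hξ0 : 0 < ξ) (hξ1 : ξ < 1)
    (h : (16 * (m : ℝ)) ^ 2 * ζ < ξ) :
    (∑ i ∈ Finset.range (P + 1), ∑ j ∈ Finset.Icc (max (2 * i + 1) 2) L,
        ((j : ℝ) - 1) * (Nat.choose L (j - 2 * i - 1) : ℝ) * (Nat.choose P i : ℝ) *
          ∑' v : ℕ,
            (16 * (m : ℝ)) ^ (2 * (j - i)) * ζ ^ (j - i) *
              ξ ^ ((L : ℤ) + (max (j : ℤ) (2 * (j : ℤ) - 2 * (i : ℤ)) + (v : ℤ))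
                - 2 * (j : ℤ))) ≤
      ξ ^ L * (16 * (m : ℝ)) ^ 4 * ζ / (1 - ξ) *
        ((L : ℝ) * ζ + 2 * (P : ℝ) * ζ / ξ ^ 2) *
        (1 + (16 * (m : ℝ)) ^ 2 * ζ / ξ ^ 2) ^ P * (1 + (16 * (m : ℝ)) ^ 2 * ζ) ^ L := by
  set a : ℝ := (16 * (m:ℝ))^2 * ζ with ha_def
  set x : ℝ := a / ξ^2 with hx_def
  have ha : 0 ≤ a := by rw [ha_def]; positivity
  have hx : 0 ≤ x := by rw [hx_def]; positivity
  have hξne : ξ ≠ 0 := ne_of_gt hξ0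
  have h1ξ : 0 < 1 - ξ := by linarith
  have hinv : 0 ≤ (1 - ξ)⁻¹ := inv_nonneg.mpr h1ξ.le
  have hzpos : ∀ k : ℤ, (0:ℝ) < ξ ^ k := fun k => zpow_pos hξ0 k
  have hgeo : ∑' v : ℕ, ξ ^ v = (1 - ξ)⁻¹ := tsum_geometric_of_lt_one hξ0.le hξ1
  have hzp : ∀ i : ℕ, ξ ^ ((L:ℤ) - 2*(i:ℤ)) = ξ^L * ((ξ^2)⁻¹)^i := by
    intro i
    have e : ((L:ℤ) - 2*(i:ℤ)) = (L:ℤ) - ((2*i : ℕ) : ℤ) := by push_cast; ring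
    rw [e, zpow_sub₀ hξne, zpow_natCast, zpow_natCast, pow_mul, div_eq_mul_inv, inv_pow]
  -- Step A: compute the inner tsum
  have hA : (∑ i ∈ Finset.range (P + 1), ∑ j ∈ Finset.Icc (max (2 * i + 1) 2) L,
        ((j : ℝ) - 1) * (Nat.choose L (j - 2 * i - 1) : ℝ) * (Nat.choose P i : ℝ) *
          ∑' v : ℕ,
            (16 * (m : ℝ)) ^ (2 * (j - i)) * ζ ^ (j - i) *
              ξ ^ ((L : ℤ) + (max (j : ℤ) (2 * (j : ℤ) - 2 * (i : ℤ)) + (v : ℤ))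
                - 2 * (j : ℤ)))
      = ∑ i ∈ Finset.range (P + 1), ∑ j ∈ Finset.Icc (max (2 * i + 1) 2) L,
        ((j : ℝ) - 1) * (Nat.choose L (j - 2 * i - 1) : ℝ) * (Nat.choose P i : ℝ) *
          (a ^ (j - i) * (ξ ^ ((L:ℤ) - 2*(i:ℤ)) * (1 - ξ)⁻¹)) := by
    refine Finset.sum_congr rfl fun i _ => Finset.sum_congr rfl fun j hj => ?_
    rw [Finset.mem_Icc] at hj
    have h2i : 2*i + 1 ≤ j := le_trans (le_max_left _ _) hj.1
    congr 1
    have h2i' : (2*(i:ℤ) + 1 : ℤ) ≤ (j:ℤ) := by exact_mod_cast h2i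
    have hmax : max (j:ℤ) (2*(j:ℤ) - 2*(i:ℤ)) = 2*(j:ℤ) - 2*(i:ℤ) :=
      max_eq_right (by omega)
    have hterm : ∀ v : ℕ, (16 * (m : ℝ)) ^ (2 * (j - i)) * ζ ^ (j - i) *
        ξ ^ ((L : ℤ) + (max (j : ℤ) (2 * (j : ℤ) - 2 * (i : ℤ)) + (v : ℤ)) - 2 * (j : ℤ))
        = (a ^ (j-i) * ξ ^ ((L:ℤ) - 2*(i:ℤ))) * ξ ^ v := by
      intro v
      have hexp : (L : ℤ) + (max (j : ℤ) (2 * (j : ℤ) - 2 * (i : ℤ)) + (v : ℤ)) - 2 * (j : ℤ)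
          = ((L:ℤ) - 2*(i:ℤ)) + (v:ℤ) := by rw [hmax]; ring
      rw [hexp, zpow_add₀ hξne, zpow_natCast, pow_mul, ha_def, mul_pow]
      ring
    rw [tsum_congr hterm, tsum_mul_left, hgeo]
    ring
  rw [hA]
  clear hA
  set D : ℝ := a * ξ^L * (1-ξ)⁻¹ * (1+a)^L with hD_def
  have hD : 0 ≤ D := by
    rw [hD_def]
    have : (0:ℝ) ≤ (1+a)^L := by positivity
    positivity
  -- Step B: per-i bound
  have hf_bound : ∀ i ∈ Finset.range (P+1),
      (∑ j ∈ Finset.Icc (max (2 * i + 1) 2) L,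
        ((j : ℝ) - 1) * (Nat.choose L (j - 2 * i - 1) : ℝ) * (Nat.choose P i : ℝ) *
          (a ^ (j - i) * (ξ ^ ((L:ℤ) - 2*(i:ℤ)) * (1 - ξ)⁻¹)))
      ≤ ((L:ℝ)*a + 2*(i:ℝ)) * (Nat.choose P i : ℝ) * x ^ i * D := by
    intro i _
    have nonneg : ∀ j ∈ Finset.Icc (2*i+1) L,
        0 ≤ ((j : ℝ) - 1) * (Nat.choose L (j - 2 * i - 1) : ℝ) * (Nat.choose P i : ℝ) *
          (a ^ (j - i) * (ξ ^ ((L:ℤ) - 2*(i:ℤ)) * (1 - ξ)⁻¹)) := by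
      intro j hj
      rw [Finset.mem_Icc] at hj
      have hj1 : (1:ℝ) ≤ (j:ℝ) := by
        have : 1 ≤ j := by omega
        exact_mod_cast this
      have h0 : 0 ≤ (j:ℝ) - 1 := by linarith
      have h2 : (0:ℝ) ≤ ξ ^ ((L:ℤ) - 2*(i:ℤ)) := (hzpos _).le
      refine mul_nonneg (mul_nonneg (mul_nonneg h0 (by positivity)) (by positivity)) ?_
      exact mul_nonneg (by positivity) (mul_nonneg h2 hinv)
    have step1 : (∑ j ∈ Finset.Icc (max (2 * i + 1) 2) L,
        ((j : ℝ) - 1) * (Nat.choose L (j - 2 * i - 1) : ℝ) * (Nat.choose P i : ℝ) *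
          (a ^ (j - i) * (ξ ^ ((L:ℤ) - 2*(i:ℤ)) * (1 - ξ)⁻¹)))
        ≤ ∑ j ∈ Finset.Icc (2*i+1) L,
        ((j : ℝ) - 1) * (Nat.choose L (j - 2 * i - 1) : ℝ) * (Nat.choose P i : ℝ) *
          (a ^ (j - i) * (ξ ^ ((L:ℤ) - 2*(i:ℤ)) * (1 - ξ)⁻¹)) :=
      Finset.sum_le_sum_of_subset_of_nonneg
        (Finset.Icc_subset_Icc_left (le_max_left _ _))
        (fun j hj _ => nonneg j hj)
    have step2 : (∑ j ∈ Finset.Icc (2*i+1) L,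
        ((j : ℝ) - 1) * (Nat.choose L (j - 2 * i - 1) : ℝ) * (Nat.choose P i : ℝ) *
          (a ^ (j - i) * (ξ ^ ((L:ℤ) - 2*(i:ℤ)) * (1 - ξ)⁻¹)))
        = ∑ k ∈ Finset.range (L + 1 - (2*i+1)),
          ((k:ℝ) + 2*(i:ℝ)) * (Nat.choose L k : ℝ) * (Nat.choose P i : ℝ) *
            (a ^ (i+1+k) * (ξ ^ ((L:ℤ) - 2*(i:ℤ)) * (1 - ξ)⁻¹)) := by
      rw [← Finset.Ico_add_one_right_eq_Icc, Finset.sum_Ico_eq_sum_range]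
      refine Finset.sum_congr rfl fun k _ => ?_
      have e1 : 2*i+1+k - 2*i - 1 = k := by omega
      have e2 : 2*i+1+k - i = i+1+k := by omega
      rw [e1, e2]
      push_cast
      ring
    have gnonneg : ∀ k : ℕ,
        0 ≤ ((k:ℝ) + 2*(i:ℝ)) * (Nat.choose L k : ℝ) * (Nat.choose P i : ℝ) *
            (a ^ (i+1+k) * (ξ ^ ((L:ℤ) - 2*(i:ℤ)) * (1 - ξ)⁻¹)) := by
      intro k
      have h2 : (0:ℝ) ≤ ξ ^ ((L:ℤ) - 2*(i:ℤ)) := (hzpos _).le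
      refine mul_nonneg (by positivity) (mul_nonneg (by positivity) (mul_nonneg h2 hinv))
    have step3 : (∑ k ∈ Finset.range (L + 1 - (2*i+1)),
          ((k:ℝ) + 2*(i:ℝ)) * (Nat.choose L k : ℝ) * (Nat.choose P i : ℝ) *
            (a ^ (i+1+k) * (ξ ^ ((L:ℤ) - 2*(i:ℤ)) * (1 - ξ)⁻¹)))
        ≤ ∑ k ∈ Finset.range (L + 1),
          ((k:ℝ) + 2*(i:ℝ)) * (Nat.choose L k : ℝ) * (Nat.choose P i : ℝ) *
            (a ^ (i+1+k) * (ξ ^ ((L:ℤ) - 2*(i:ℤ)) * (1 - ξ)⁻¹)) :=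
      Finset.sum_le_sum_of_subset_of_nonneg
        (Finset.range_subset_range.mpr (by omega))
        (fun k _ _ => gnonneg k)
    have factor : (∑ k ∈ Finset.range (L + 1),
          ((k:ℝ) + 2*(i:ℝ)) * (Nat.choose L k : ℝ) * (Nat.choose P i : ℝ) *
            (a ^ (i+1+k) * (ξ ^ ((L:ℤ) - 2*(i:ℤ)) * (1 - ξ)⁻¹)))
        = ((Nat.choose P i : ℝ) * a^(i+1) * (ξ ^ ((L:ℤ) - 2*(i:ℤ)) * (1 - ξ)⁻¹)) *
          ∑ k ∈ Finset.range (L+1), ((k:ℝ) + 2*(i:ℝ)) * (Nat.choose L k : ℝ) * a^k := by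
      rw [Finset.mul_sum]
      refine Finset.sum_congr rfl fun k _ => ?_
      rw [show i+1+k = (i+1)+k from rfl, pow_add]
      ring
    have hcoef : 0 ≤ (Nat.choose P i : ℝ) * a^(i+1) * (ξ ^ ((L:ℤ) - 2*(i:ℤ)) * (1 - ξ)⁻¹) := by
      have h2 : (0:ℝ) ≤ ξ ^ ((L:ℤ) - 2*(i:ℤ)) := (hzpos _).le
      refine mul_nonneg (by positivity) (mul_nonneg h2 hinv)
    have inner := weighted_sum_le L a (2*(i:ℝ)) ha
    have step4 : ((Nat.choose P i : ℝ) * a^(i+1) * (ξ ^ ((L:ℤ) - 2*(i:ℤ)) * (1 - ξ)⁻¹)) *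
          (∑ k ∈ Finset.range (L+1), ((k:ℝ) + 2*(i:ℝ)) * (Nat.choose L k : ℝ) * a^k)
        ≤ ((Nat.choose P i : ℝ) * a^(i+1) * (ξ ^ ((L:ℤ) - 2*(i:ℤ)) * (1 - ξ)⁻¹)) *
          (((L:ℝ)*a + 2*(i:ℝ)) * (1+a)^L) :=
      mul_le_mul_of_nonneg_left inner hcoef
    have final_eq : ((Nat.choose P i : ℝ) * a^(i+1) * (ξ ^ ((L:ℤ) - 2*(i:ℤ)) * (1 - ξ)⁻¹)) *
          (((L:ℝ)*a + 2*(i:ℝ)) * (1+a)^L)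
        = ((L:ℝ)*a + 2*(i:ℝ)) * (Nat.choose P i : ℝ) * x ^ i * D := by
      rw [hzp i, hx_def, hD_def, div_eq_mul_inv, mul_pow, inv_pow]
      ring
    calc _ ≤ _ := step1
      _ = _ := step2
      _ ≤ _ := step3
      _ = _ := factor
      _ ≤ _ := step4
      _ = _ := final_eq
  have hsum := Finset.sum_le_sum hf_bound
  refine le_trans hsum ?_
  -- Step C: sum over i
  have hsplit : ∑ i ∈ Finset.range (P+1),
      ((L:ℝ)*a + 2*(i:ℝ)) * (Nat.choose P i : ℝ) * x ^ i * D
      = (2*D) * ∑ i ∈ Finset.range (P+1),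
        ((i:ℝ) + (L:ℝ)*a/2) * (Nat.choose P i : ℝ) * x ^ i := by
    rw [Finset.mul_sum]
    exact Finset.sum_congr rfl fun i _ => by ring
  have hw := weighted_sum_le P x ((L:ℝ)*a/2) hx
  have h2D : (0:ℝ) ≤ 2*D := by linarith
  have step : (2*D) * (∑ i ∈ Finset.range (P+1),
        ((i:ℝ) + (L:ℝ)*a/2) * (Nat.choose P i : ℝ) * x ^ i)
      ≤ (2*D) * (((P:ℝ)*x + (L:ℝ)*a/2) * (1+x)^P) :=
    mul_le_mul_of_nonneg_left hw h2D
  rw [hsplit]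
  refine le_trans step (le_of_eq ?_)
  -- Step D: final algebra
  rw [hD_def, hx_def, ha_def]
  field_simp
  ring
end
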